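/- arXiv:2510.09028 — 2 statements merged into one kernel-verified Lean document; each statement's English description precedes it below -/
import Mathlib

section
/- Let α ∈ (1/2,1) and T > 0. There exists a constant C > 0 (depending only on α and T) such that for all t ∈ [0,T] and all 0 < h ≤ 1, ∫_0^t |g^{(h)}(t,u) − 1| du ≤ C h^α. -/
/-!
Write `K = rlKernel α` and `L = rlKernel (1 - α)`. Riemann–Liouville kernels form a convolution
semigroup (a beta integral), so `L * K = rlKernel 1 = 1` and
`g^{(h)}(t,u) - 1 = ∫_u^t L(t-v) (K(φ_h(v) - u) - K(v - u)) dv`. Taking norms and exchanging the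
order of integration over the triangle `0 < u < v ≤ t`, the inner integral is the `L¹(0,v)`
distance between `K` and its translate by `χ_h(v) ∈ [0,h)`, at most `2 χ_h(v)^α / Γ(α+1)`, and the
outer one is `∫_0^t L = t^(1-α) / Γ(2-α)`.
-/

open MeasureTheory intervalIntegral Real

/-- Fractional kernel `K(u) = u^(α-1)/Γ(α)` for `u > 0`, `0` otherwise. -/
noncomputable def Kker (α u : ℝ) : ℝ := if 0 < u then u ^ (α - 1) / Real.Gamma α else 0

/-- First-order resolvent kernel `L(u) = u^(-α)/Γ(1-α)` for `u > 0`, `0` otherwise. -/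
noncomputable def Lker (α u : ℝ) : ℝ := if 0 < u then u ^ (-α) / Real.Gamma (1 - α) else 0

/-- Discretization map `φ_h(t) = h⌊t/h⌋`. -/
noncomputable def phi (h t : ℝ) : ℝ := h * (⌊t / h⌋ : ℝ)

/-- `χ_h(u) = u - φ_h(u)`. -/
noncomputable def chi (h u : ℝ) : ℝ := u - phi h u

/-- Discretized kernel `K^{(h)}`. -/
noncomputable def Kh (α h t s : ℝ) : ℝ :=
  if 0 ≤ s ∧ s < phi h t then Kker α (phi h t - s) else 0

/-- The kernel `g^{(h)}(t,s) = ∫_s^t L(t-v) K^{(h)}(v,s) dv`. -/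
noncomputable def gh (α h t s : ℝ) : ℝ := ∫ v in s..t, Lker α (t - v) * Kh α h v s

open Set
open scoped ENNReal

/-- Riemann–Liouville kernel: `Kker α = rlKernel α` and `Lker α = rlKernel (1 - α)`. -/
noncomputable def rlKernel (β x : ℝ) : ℝ := if 0 < x then x ^ (β - 1) / Gamma β else 0

section rlKernel

variable {β γ a b x y : ℝ}

lemma rlKernel_of_pos (hx : 0 < x) : rlKernel β x = x ^ (β - 1) / Gamma β := if_pos hx

lemma rlKernel_of_nonpos (hx : x ≤ 0) : rlKernel β x = 0 := if_neg hx.not_gt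

lemma rlKernel_nonneg (hβ : 0 < β) (x : ℝ) : 0 ≤ rlKernel β x := by
  unfold rlKernel
  split_ifs with hx
  · have := Gamma_pos_of_pos hβ
    positivity
  · exact le_rfl

lemma rlKernel_antitoneOn (hβ : 0 < β) (hβ1 : β ≤ 1) : AntitoneOn (rlKernel β) (Ioi 0) := by
  intro x hx y hy hxy
  rw [rlKernel_of_pos hx, rlKernel_of_pos hy]
  exact div_le_div_of_nonneg_right (rpow_le_rpow_of_nonpos hx hxy (by linarith))
    (Gamma_pos_of_pos hβ).le

@[fun_prop]
lemma measurable_rlKernel : Measurable (rlKernel β) :=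
  Measurable.ite measurableSet_Ioi (by fun_prop) measurable_const

lemma intervalIntegrable_rlKernel (hβ : 0 < β) (a b : ℝ) :
    IntervalIntegrable (rlKernel β) volume a b := by
  have hpow : IntervalIntegrable (fun x : ℝ => x ^ (β - 1) / Gamma β) volume a b :=
    (intervalIntegrable_rpow' (by linarith)).div_const _
  rw [intervalIntegrable_iff] at hpow ⊢
  have hind : rlKernel β = (Ioi 0).indicator (fun x : ℝ => x ^ (β - 1) / Gamma β) := by
    ext x
    simp only [rlKernel, indicator, mem_Ioi]
  rw [hind]
  exact hpow.indicator measurableSet_Ioi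

lemma integral_rlKernel (hβ : 0 < β) (ha : 0 ≤ a) (hb : 0 ≤ b) :
    ∫ x in a..b, rlKernel β x = (b ^ β - a ^ β) / Gamma (β + 1) := by
  have hpos : ∀ x ∈ uIoc a b, rlKernel β x = x ^ (β - 1) / Gamma β := fun x hx =>
    rlKernel_of_pos ((le_min ha hb).trans_lt hx.1)
  rw [integral_congr_ae (Filter.Eventually.of_forall hpos), intervalIntegral.integral_div,
    integral_rpow (Or.inl (by linarith)), sub_add_cancel, Gamma_add_one hβ.ne', div_div]

lemma integral_rpow_mul_one_sub_rpow (ha : 0 < a) (hb : 0 < b) :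
    ∫ x in (0:ℝ)..1, x ^ (a - 1) * (1 - x) ^ (b - 1) = Gamma a * Gamma b / Gamma (a + b) := by
  have hc := Complex.betaIntegral_eq_Gamma_mul_div (a : ℂ) (b : ℂ) (by simpa) (by simpa)
  rw [Complex.betaIntegral] at hc
  have hreal : EqOn (fun x : ℝ => (x : ℂ) ^ ((a : ℂ) - 1) * (1 - (x : ℂ)) ^ ((b : ℂ) - 1))
      (fun x : ℝ => ((x ^ (a - 1) * (1 - x) ^ (b - 1) : ℝ) : ℂ)) (uIcc 0 1) := by
    intro x hx
    rw [uIcc_of_le zero_le_one] at hx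
    simp only [Complex.ofReal_mul, Complex.ofReal_cpow hx.1,
      Complex.ofReal_cpow (sub_nonneg.2 hx.2)]
    push_cast
    ring_nf
  rw [integral_congr hreal, intervalIntegral.integral_ofReal, ← Complex.ofReal_add,
    Complex.Gamma_ofReal, Complex.Gamma_ofReal, Complex.Gamma_ofReal] at hc
  exact_mod_cast hc

lemma integral_rlKernel_mul_rlKernel (hβ : 0 < β) (hγ : 0 < γ) (hxy : x < y) :
    ∫ v in x..y, rlKernel β (y - v) * rlKernel γ (v - x) = rlKernel (β + γ) (y - x) := by
  have hd : 0 < y - x := sub_pos.2 hxy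
  have hsub := intervalIntegral.integral_comp_mul_add
    (fun v => rlKernel β (y - v) * rlKernel γ (v - x)) hd.ne' x (a := 0) (b := 1)
  rw [mul_zero, zero_add, mul_one, sub_add_cancel, smul_eq_mul] at hsub
  have hscaled : EqOn
      (fun s => rlKernel β (y - ((y - x) * s + x)) * rlKernel γ ((y - x) * s + x - x))
      (fun s => (y - x) ^ (β - 1) * (y - x) ^ (γ - 1) / (Gamma β * Gamma γ) *
        (s ^ (γ - 1) * (1 - s) ^ (β - 1))) (Ioo 0 1) := by
    intro s ⟨hs0, hs1⟩
    have h1 : y - ((y - x) * s + x) = (y - x) * (1 - s) := by ring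
    have h2 : (y - x) * s + x - x = (y - x) * s := by ring
    simp only [h1, h2]
    rw [rlKernel_of_pos (by nlinarith), rlKernel_of_pos (by positivity),
      mul_rpow hd.le (by linarith), mul_rpow hd.le hs0.le]
    field_simp
  have hbeta := integral_rpow_mul_one_sub_rpow hγ hβ
  rw [intervalIntegral.integral_of_le zero_le_one, integral_Ioc_eq_integral_Ioo,
    setIntegral_congr_fun measurableSet_Ioo hscaled, MeasureTheory.integral_const_mul,
    ← integral_Ioc_eq_integral_Ioo, ← intervalIntegral.integral_of_le zero_le_one, hbeta] at hsub
  have hpow : (y - x) ^ (β + γ - 1) = (y - x) ^ (β - 1) * (y - x) ^ (γ - 1) * (y - x) := by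
    rw [← rpow_add hd, ← rpow_add_one hd.ne']
    ring_nf
  rw [← (eq_inv_mul_iff_mul_eq₀ hd.ne').1 hsub, rlKernel_of_pos hd, hpow, add_comm γ β]
  have := Gamma_pos_of_pos hβ
  have := Gamma_pos_of_pos hγ
  field_simp

lemma integral_abs_rlKernel_sub_shift_le {δ v : ℝ} (hβ : 0 < β) (hβ1 : β ≤ 1) (hδ : 0 ≤ δ)
    (hδv : δ ≤ v) :
    ∫ w in 0..v, |rlKernel β (w - δ) - rlKernel β w| ≤ 2 * δ ^ β / Gamma (β + 1) := by
  have hshift (a b : ℝ) : IntervalIntegrable (fun w => rlKernel β (w - δ)) volume a b := by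
    simpa using (intervalIntegrable_rlKernel hβ (a - δ) (b - δ)).comp_sub_right δ
  have habs (a b : ℝ) :
      IntervalIntegrable (fun w => |rlKernel β (w - δ) - rlKernel β w|) volume a b :=
    ((hshift a b).sub (intervalIntegrable_rlKernel hβ a b)).abs
  have hleft : ∫ w in 0..δ, |rlKernel β (w - δ) - rlKernel β w| = δ ^ β / Gamma (β + 1) := by
    have hcongr : ∀ w ∈ uIoc 0 δ, |rlKernel β (w - δ) - rlKernel β w| = rlKernel β w := by
      intro w hw
      rw [uIoc_of_le hδ] at hw
      rw [rlKernel_of_nonpos (by linarith [hw.2]), zero_sub, abs_neg,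
        abs_of_nonneg (rlKernel_nonneg hβ w)]
    rw [integral_congr_ae (Filter.Eventually.of_forall hcongr), integral_rlKernel hβ le_rfl hδ,
      zero_rpow hβ.ne', sub_zero]
  -- past the jump at `δ` the shifted kernel dominates, since `rlKernel β` is antitone
  have hright : ∫ w in δ..v, |rlKernel β (w - δ) - rlKernel β w|
      = ((v - δ) ^ β - (v ^ β - δ ^ β)) / Gamma (β + 1) := by
    have hcongr : ∀ w ∈ uIoc δ v,
        |rlKernel β (w - δ) - rlKernel β w| = rlKernel β (w - δ) - rlKernel β w := by
      intro w hw
      rw [uIoc_of_le hδv] at hw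
      have hw0 : 0 < w - δ := sub_pos.2 hw.1
      refine abs_of_nonneg (sub_nonneg.2 ?_)
      exact rlKernel_antitoneOn hβ hβ1 hw0 (mem_Ioi.2 (by linarith)) (by linarith)
    rw [integral_congr_ae (Filter.Eventually.of_forall hcongr),
      intervalIntegral.integral_sub (hshift δ v) (intervalIntegrable_rlKernel hβ δ v),
      intervalIntegral.integral_comp_sub_right (rlKernel β), sub_self,
      integral_rlKernel hβ le_rfl (by linarith), integral_rlKernel hβ hδ (by linarith),
      zero_rpow hβ.ne', sub_zero]
    ring
  rw [← intervalIntegral.integral_add_adjacent_intervals (habs 0 δ) (habs δ v), hleft, hright,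
    ← add_div]
  have hmono : (v - δ) ^ β ≤ v ^ β := rpow_le_rpow (by linarith) (by linarith) hβ.le
  exact div_le_div_of_nonneg_right (by linarith) (Gamma_pos_of_pos (by linarith)).le

lemma lintegral_enorm_rlKernel_sub (hβ : 0 < β) (hy : 0 ≤ y) :
    ∫⁻ v in Ioc 0 y, ‖rlKernel β (y - v)‖ₑ = ENNReal.ofReal (y ^ β / Gamma (β + 1)) := by
  have hint : IntervalIntegrable (fun v => rlKernel β (y - v)) volume 0 y := by
    simpa using (intervalIntegrable_rlKernel hβ (y - 0) (y - y)).comp_sub_left y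
  simp only [Real.enorm_of_nonneg (rlKernel_nonneg hβ _)]
  rw [← ofReal_integral_eq_lintegral_ofReal
      ((intervalIntegrable_iff_integrableOn_Ioc_of_le hy).1 hint)
      (ae_of_all _ fun v => rlKernel_nonneg hβ _),
    ← intervalIntegral.integral_of_le hy, intervalIntegral.integral_comp_sub_left (rlKernel β),
    sub_self, sub_zero, integral_rlKernel hβ le_rfl hy, zero_rpow hβ.ne', sub_zero]

end rlKernel

lemma lintegral_Ioo_Ioc_swap {a t : ℝ} (f : ℝ → ℝ → ℝ≥0∞)
    (hf : Measurable (Function.uncurry f)) :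
    ∫⁻ u in Ioo a t, ∫⁻ v in Ioc u t, f u v = ∫⁻ v in Ioc a t, ∫⁻ u in Ioo a v, f u v := by
  set S : Set (ℝ × ℝ) := {p | a < p.1 ∧ p.1 < p.2 ∧ p.2 ≤ t}
  have hS : MeasurableSet S :=
    (measurableSet_lt measurable_const measurable_fst).inter
      ((measurableSet_lt measurable_fst measurable_snd).inter
        (measurableSet_le measurable_snd measurable_const))
  have hleft (u : ℝ) : (Ioo a t).indicator (fun u => ∫⁻ v in Ioc u t, f u v) u
      = ∫⁻ v, S.indicator (Function.uncurry f) (u, v) := by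
    by_cases hu : u ∈ Ioo a t
    · rw [indicator_of_mem hu, ← lintegral_indicator measurableSet_Ioc]
      congr 1 with v
      by_cases hv : v ∈ Ioc u t
      · rw [indicator_of_mem hv, indicator_of_mem (show (u, v) ∈ S from ⟨hu.1, hv⟩)]
        rfl
      · rw [indicator_of_notMem hv, indicator_of_notMem (fun h : (u, v) ∈ S => hv h.2)]
    · rw [indicator_of_notMem hu, eq_comm, lintegral_eq_zero_iff' (by fun_prop)]
      refine Filter.Eventually.of_forall fun v => indicator_of_notMem ?_ _
      exact fun h : (u, v) ∈ S => hu ⟨h.1, h.2.1.trans_le h.2.2⟩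
  have hright (v : ℝ) : (Ioc a t).indicator (fun v => ∫⁻ u in Ioo a v, f u v) v
      = ∫⁻ u, S.indicator (Function.uncurry f) (u, v) := by
    by_cases hv : v ∈ Ioc a t
    · rw [indicator_of_mem hv, ← lintegral_indicator measurableSet_Ioo]
      congr 1 with u
      by_cases hu : u ∈ Ioo a v
      · rw [indicator_of_mem hu, indicator_of_mem (show (u, v) ∈ S from ⟨hu.1, hu.2, hv.2⟩)]
        rfl
      · rw [indicator_of_notMem hu,
          indicator_of_notMem (fun h : (u, v) ∈ S => hu ⟨h.1, h.2.1⟩)]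
    · rw [indicator_of_notMem hv, eq_comm, lintegral_eq_zero_iff' (by fun_prop)]
      refine Filter.Eventually.of_forall fun u => indicator_of_notMem ?_ _
      exact fun h : (u, v) ∈ S => hv ⟨h.1.trans h.2.1, h.2.2⟩
  rw [← lintegral_indicator measurableSet_Ioo, ← lintegral_indicator measurableSet_Ioc]
  simp_rw [hleft, hright]
  exact lintegral_lintegral_swap (hf.indicator hS).aemeasurable

lemma integral_norm_le_toReal_lintegral_enorm {X E : Type*} [MeasurableSpace X] {μ : Measure X}
    [NormedAddCommGroup E] (f : X → E) : ∫ x, ‖f x‖ ∂μ ≤ (∫⁻ x, ‖f x‖ₑ ∂μ).toReal := by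
  simpa [ofReal_norm] using
    (le_abs_self _).trans (norm_integral_le_lintegral_norm (μ := μ) fun x => ‖f x‖)

section discretization

variable {h t u v : ℝ}

lemma chi_eq_mul_fract (hh : h ≠ 0) : chi h t = h * Int.fract (t / h) := by
  rw [chi, phi, Int.fract, mul_sub, mul_div_cancel₀ t hh]

lemma chi_nonneg (hh : 0 < h) : 0 ≤ chi h t := by
  rw [chi_eq_mul_fract hh.ne']
  exact mul_nonneg hh.le (Int.fract_nonneg _)

lemma chi_lt (hh : 0 < h) : chi h t < h := by
  rw [chi_eq_mul_fract hh.ne']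
  exact mul_lt_of_lt_one_right hh (Int.fract_lt_one _)

lemma phi_nonneg (hh : 0 < h) (ht : 0 ≤ t) : 0 ≤ phi h t :=
  mul_nonneg hh.le (by exact_mod_cast Int.floor_nonneg.2 (div_nonneg ht hh.le))

lemma phi_add_le_of_lt_phi (hh : 0 < h) (huv : u < phi h v) : phi h u + h ≤ phi h v := by
  have hfloor : ⌊u / h⌋ < ⌊v / h⌋ := by
    rw [Int.floor_lt, div_lt_iff₀ hh, mul_comm]
    exact huv
  have hcast : (⌊u / h⌋ : ℝ) + 1 ≤ ⌊v / h⌋ := by exact_mod_cast Int.add_one_le_of_lt hfloor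
  calc phi h u + h = h * ((⌊u / h⌋ : ℝ) + 1) := by rw [phi, mul_add, mul_one]
    _ ≤ phi h v := mul_le_mul_of_nonneg_left hcast hh.le

@[fun_prop]
lemma measurable_phi : Measurable (phi h) := by
  unfold phi
  fun_prop

end discretization

section discreteResolvent

variable {α h t u v : ℝ}

lemma Lker_eq_rlKernel (α : ℝ) : Lker α = rlKernel (1 - α) := by
  ext x
  rw [Lker, rlKernel, sub_sub_cancel_left]

lemma Kh_of_nonneg (hu : 0 ≤ u) : Kh α h v u = rlKernel α (phi h v - u) := by
  unfold Kh
  split_ifs with hv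
  · rfl
  · exact (rlKernel_of_nonpos (sub_nonpos.2 (not_lt.1 fun hlt => hv ⟨hu, hlt⟩))).symm

lemma gh_of_nonneg (hu : 0 ≤ u) :
    gh α h t u = ∫ v in u..t, rlKernel (1 - α) (t - v) * rlKernel α (phi h v - u) := by
  simp only [gh, Lker_eq_rlKernel, Kh_of_nonneg hu]

lemma rlKernel_phi_sub_le (hα : 0 < α) (hα1 : α ≤ 1) (hh : 0 < h) (u v : ℝ) :
    rlKernel α (phi h v - u) ≤ rlKernel α (phi h u + h - u) := by
  by_cases hv : u < phi h v
  · have hgap : 0 < phi h u + h - u := by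
      have := chi_lt (t := u) hh
      rw [chi] at this
      linarith
    exact rlKernel_antitoneOn hα hα1 hgap (mem_Ioi.2 (sub_pos.2 hv))
      (by linarith [phi_add_le_of_lt_phi hh hv])
  · rw [rlKernel_of_nonpos (by linarith)]
    exact rlKernel_nonneg hα _

lemma intervalIntegrable_gh_integrand (hα : 0 < α) (hα1 : α < 1) (hh : 0 < h) (a b : ℝ) :
    IntervalIntegrable
      (fun v => rlKernel (1 - α) (t - v) * rlKernel α (phi h v - u)) volume a b := by
  have hL : IntervalIntegrable (fun v => rlKernel (1 - α) (t - v)) volume a b := by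
    simpa using (intervalIntegrable_rlKernel (by linarith) (t - a) (t - b)).comp_sub_left t
  have hmeas : AEStronglyMeasurable (fun v => rlKernel α (phi h v - u)) volume :=
    (by fun_prop : Measurable fun v => rlKernel α (phi h v - u)).aestronglyMeasurable
  have hbound : ∀ᵐ v ∂volume, ‖rlKernel α (phi h v - u)‖ ≤ rlKernel α (phi h u + h - u) :=
    Filter.Eventually.of_forall fun v => by
      rw [Real.norm_of_nonneg (rlKernel_nonneg hα _)]
      exact rlKernel_phi_sub_le hα hα1.le hh u v
  exact ⟨hL.1.mul_bdd hmeas.restrict (ae_restrict_of_ae hbound),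
    hL.2.mul_bdd hmeas.restrict (ae_restrict_of_ae hbound)⟩

lemma integral_rlKernel_one_sub_mul_rlKernel (hα : 0 < α) (hα1 : α < 1) (hut : u < t) :
    ∫ v in u..t, rlKernel (1 - α) (t - v) * rlKernel α (v - u) = 1 := by
  rw [integral_rlKernel_mul_rlKernel (by linarith) hα hut, sub_add_cancel,
    rlKernel_of_pos (sub_pos.2 hut), sub_self, rpow_zero, Gamma_one, div_one]

lemma gh_sub_one_eq (hα : 0 < α) (hα1 : α < 1) (hh : 0 < h) (hu : 0 ≤ u) (hut : u < t) :
    gh α h t u - 1 = ∫ v in u..t,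
      rlKernel (1 - α) (t - v) * (rlKernel α (phi h v - u) - rlKernel α (v - u)) := by
  have hone := integral_rlKernel_one_sub_mul_rlKernel hα hα1 hut
  -- the integral of `L * K` is `1 ≠ 0`, so in particular it is integrable
  have hK := intervalIntegrable_of_integral_ne_zero (hone ▸ one_ne_zero)
  simp only [mul_sub]
  rw [integral_sub (intervalIntegrable_gh_integrand hα hα1 hh u t) hK, hone, gh_of_nonneg hu]

lemma lintegral_enorm_discretization_error_le (hα : 0 < α) (hα1 : α ≤ 1) (hh : 0 < h)
    (hv : 0 ≤ v) :
    ∫⁻ u in Ioo 0 v, ‖rlKernel α (phi h v - u) - rlKernel α (v - u)‖ₑ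
      ≤ ENNReal.ofReal (2 * h ^ α / Gamma (α + 1)) := by
  have hshift : ∀ u, rlKernel α (phi h v - u) = rlKernel α ((v - u) - chi h v) := fun u => by
    rw [chi]; ring_nf
  have hK (c : ℝ) : IntervalIntegrable (fun u => rlKernel α (c - u)) volume 0 v := by
    simpa using (intervalIntegrable_rlKernel hα (c - 0) (c - v)).comp_sub_left c
  have hint :
      IntegrableOn (fun u => |rlKernel α (phi h v - u) - rlKernel α (v - u)|) (Ioc 0 v) :=
    (intervalIntegrable_iff_integrableOn_Ioc_of_le hv).1 ((hK _).sub (hK _)).abs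
  have hreal : ∫ u in (0:ℝ)..v, |rlKernel α (phi h v - u) - rlKernel α (v - u)|
      ≤ 2 * h ^ α / Gamma (α + 1) := by
    simp only [hshift]
    rw [intervalIntegral.integral_comp_sub_left
      (fun w => |rlKernel α (w - chi h v) - rlKernel α w|), sub_self, sub_zero]
    refine (integral_abs_rlKernel_sub_shift_le hα hα1 (chi_nonneg hh) ?_).trans ?_
    · have := phi_nonneg hh hv; rw [chi]; linarith
    · exact div_le_div_of_nonneg_right (mul_le_mul_of_nonneg_left
        (rpow_le_rpow (chi_nonneg hh) (chi_lt hh).le hα.le) zero_le_two)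
        (Gamma_pos_of_pos (by linarith)).le
  calc ∫⁻ u in Ioo 0 v, ‖rlKernel α (phi h v - u) - rlKernel α (v - u)‖ₑ
      ≤ ∫⁻ u in Ioc 0 v, ENNReal.ofReal |rlKernel α (phi h v - u) - rlKernel α (v - u)| := by
        simp only [Real.enorm_eq_ofReal_abs]
        exact lintegral_mono_set Ioo_subset_Ioc_self
    _ = ENNReal.ofReal (∫ u in (0:ℝ)..v, |rlKernel α (phi h v - u) - rlKernel α (v - u)|) := by
        rw [intervalIntegral.integral_of_le hv,
          ofReal_integral_eq_lintegral_ofReal hint (ae_of_all _ fun u => abs_nonneg _)]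
    _ ≤ ENNReal.ofReal (2 * h ^ α / Gamma (α + 1)) := ENNReal.ofReal_le_ofReal hreal

lemma lintegral_enorm_gh_sub_one_le (hα : 0 < α) (hα1 : α < 1) (hh : 0 < h) (ht : 0 ≤ t) :
    ∫⁻ u in Ioo 0 t, ‖gh α h t u - 1‖ₑ
      ≤ ENNReal.ofReal (t ^ (1 - α) / Gamma (1 - α + 1)) *
          ENNReal.ofReal (2 * h ^ α / Gamma (α + 1)) := by
  set F : ℝ → ℝ → ℝ≥0∞ := fun u v =>
    ‖rlKernel (1 - α) (t - v)‖ₑ * ‖rlKernel α (phi h v - u) - rlKernel α (v - u)‖ₑ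
  have hpoint : ∀ u ∈ Ioo 0 t, ‖gh α h t u - 1‖ₑ ≤ ∫⁻ v in Ioc u t, F u v := fun u hu => by
    rw [gh_sub_one_eq hα hα1 hh hu.1.le hu.2, intervalIntegral.integral_of_le hu.2.le]
    refine (enorm_integral_le_lintegral_enorm _).trans_eq ?_
    simp only [F, enorm_mul]
  calc ∫⁻ u in Ioo 0 t, ‖gh α h t u - 1‖ₑ
      ≤ ∫⁻ u in Ioo 0 t, ∫⁻ v in Ioc u t, F u v := setLIntegral_mono' measurableSet_Ioo hpoint
    _ = ∫⁻ v in Ioc 0 t, ∫⁻ u in Ioo 0 v, F u v := lintegral_Ioo_Ioc_swap F (by fun_prop)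
    _ = ∫⁻ v in Ioc 0 t, ‖rlKernel (1 - α) (t - v)‖ₑ *
          ∫⁻ u in Ioo 0 v, ‖rlKernel α (phi h v - u) - rlKernel α (v - u)‖ₑ := by
        simp only [F]
        congr 1 with v
        exact lintegral_const_mul _ (by fun_prop)
    _ ≤ ∫⁻ v in Ioc 0 t,
          ‖rlKernel (1 - α) (t - v)‖ₑ * ENNReal.ofReal (2 * h ^ α / Gamma (α + 1)) :=
        setLIntegral_mono' measurableSet_Ioc fun v hv =>
          mul_le_mul_right (lintegral_enorm_discretization_error_le hα hα1.le hh hv.1.le) _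
    _ = _ := by
        rw [lintegral_mul_const _ (by fun_prop), lintegral_enorm_rlKernel_sub (sub_pos.2 hα1) ht]

end discreteResolvent

/-- `L¹` bound `∫_0^t |g^{(h)}(t,u) − 1| du ≤ C h^α` (Lemma 3.4, eq. (3.10)). -/
theorem gh_sub_one_L1_bound (α T : ℝ) (hα : α ∈ Set.Ioo (1/2 : ℝ) 1) (hT : 0 < T) :
    ∃ C > 0, ∀ t h : ℝ, 0 ≤ t → t ≤ T → 0 < h → h ≤ 1 →
      (∫ u in (0:ℝ)..t, |gh α h t u - 1|) ≤ C * h ^ α := by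
  obtain ⟨hα0, hα1⟩ : 0 < α ∧ α < 1 := ⟨by linarith [hα.1], hα.2⟩
  have hΓ := Gamma_pos_of_pos (by linarith : 0 < 1 - α + 1)
  refine ⟨T ^ (1 - α) / Gamma (1 - α + 1) * (2 / Gamma (α + 1)),
    by have := Gamma_pos_of_pos (by linarith : 0 < α + 1); positivity,
    fun t h ht htT hh _ => ?_⟩
  have hLt : t ^ (1 - α) / Gamma (1 - α + 1) ≤ T ^ (1 - α) / Gamma (1 - α + 1) :=
    div_le_div_of_nonneg_right (rpow_le_rpow ht htT (by linarith)) hΓ.le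
  calc ∫ u in (0:ℝ)..t, |gh α h t u - 1|
      ≤ (∫⁻ u in Ioo 0 t, ‖gh α h t u - 1‖ₑ).toReal := by
        simp only [← Real.norm_eq_abs]
        rw [intervalIntegral.integral_of_le ht, integral_Ioc_eq_integral_Ioo]
        exact integral_norm_le_toReal_lintegral_enorm _
    _ ≤ t ^ (1 - α) / Gamma (1 - α + 1) * (2 * h ^ α / Gamma (α + 1)) := by
        refine ENNReal.toReal_le_of_le_ofReal (by positivity) ?_
        rw [ENNReal.ofReal_mul (by positivity)]
        exact lintegral_enorm_gh_sub_one_le hα0 hα1 hh ht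
    _ = t ^ (1 - α) / Gamma (1 - α + 1) * (2 / Gamma (α + 1)) * h ^ α := by ring
    _ ≤ _ := by gcongr
end

section
/- Let α ∈ (1/2,1) and T > 0. There exists a constant C > 0 (depending only on α and T) such that for all t ∈ [0,T] and all 0 < h ≤ 1, h ∫_0^t K(h−χ_h(u)) · min((t−u)^(−α), h^(−α)) du ≤ C h^α. -/
/-!
On the mesh cell `[jh, (j+1)h)` the factor `K(h - χ_h(u))` is `K((j+1)h - u)`, whose integral over
the cell is `h^α / Γ(α+1)`. With `n = ⌊t/h⌋ + 1` cells covering `(0, t]`, the factor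
`min((t-u)^(-α), h^(-α))` is at most `((n-j)h/3)^(-α)` on cell `j`, so the integral is bounded by
`h^α / Γ(α+1) · (h/3)^(-α) · ∑_{i ≤ n} i^(-α)`. The partial sums of the `p`-series
satisfy `∑_{i ≤ n} i^(-α) ≤ n^(1-α)/(1-α)`, and `nh ≤ t + h ≤ T + 1`.
-/

open MeasureTheory intervalIntegral Real

section Kernel

variable {α : ℝ}

lemma Kker_nonneg (hα : 0 < α) (u : ℝ) : 0 ≤ Kker α u := by
  unfold Kker
  split_ifs with hu
  · exact div_nonneg (rpow_nonneg hu.le _) (Gamma_pos_of_pos hα).le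
  · exact le_rfl

lemma eqOn_Kker_rpow : Set.EqOn (Kker α) (fun x => x ^ (α - 1) / Gamma α) (Set.Ioi 0) :=
  fun _ hx => if_pos hx

lemma intervalIntegrable_Kker (hα : 0 < α) {c : ℝ} (hc : 0 ≤ c) :
    IntervalIntegrable (Kker α) volume 0 c := by
  refine (intervalIntegrable_congr ?_).mp
    ((intervalIntegral.intervalIntegrable_rpow' (r := α - 1) (by linarith)).div_const (Gamma α))
  rw [Set.uIoc_of_le hc]
  exact fun x hx => (eqOn_Kker_rpow hx.1).symm

lemma integral_Kker (hα : 0 < α) {c : ℝ} (hc : 0 ≤ c) :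
    ∫ x in (0:ℝ)..c, Kker α x = c ^ α / Gamma (α + 1) := by
  rw [integral_congr_ae (ae_of_all _ fun x hx => eqOn_Kker_rpow (Set.uIoc_of_le hc ▸ hx).1),
    intervalIntegral.integral_div, integral_rpow (Or.inl (by linarith)), sub_add_cancel,
    zero_rpow hα.ne', sub_zero, Gamma_add_one hα.ne', div_div]

lemma integrableOn_Ico_Kker_sub (hα : 0 < α) {a b : ℝ} (hab : a ≤ b) :
    IntegrableOn (fun u => Kker α (b - u)) (Set.Ico a b) := by
  have := (intervalIntegrable_Kker hα (sub_nonneg.2 hab)).comp_sub_left b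
  rw [sub_zero, sub_sub_cancel] at this
  exact (intervalIntegrable_iff_integrableOn_Ico_of_le hab).1 this.symm

lemma setIntegral_Ico_Kker_sub (hα : 0 < α) {a b : ℝ} (hab : a ≤ b) :
    ∫ u in Set.Ico a b, Kker α (b - u) = (b - a) ^ α / Gamma (α + 1) := by
  rw [integral_Ico_eq_integral_Ioc, ← intervalIntegral.integral_of_le hab,
    intervalIntegral.integral_comp_sub_left, sub_self, integral_Kker hα (sub_nonneg.2 hab)]

end Kernel

section PSeries

variable {α : ℝ}

lemma one_sub_mul_rpow_neg_le_sub (hα0 : 0 ≤ α) (hα1 : α ≤ 1) {x : ℝ} (hx : 0 ≤ x) :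
    (1 - α) * (x + 1) ^ (-α) ≤ (x + 1) ^ (1 - α) - x ^ (1 - α) := by
  have hx1 : 0 < x + 1 := by linarith
  have hbern := rpow_one_add_le_one_add_mul_self (s := -1 / (x + 1))
    (by rw [neg_div, neg_le_neg_iff, div_le_one hx1]; linarith) (p := 1 - α)
    (by linarith) (by linarith)
  have hbase : 1 + -1 / (x + 1) = x / (x + 1) := by field_simp; ring
  rw [hbase, div_rpow hx hx1.le, div_le_iff₀ (rpow_pos_of_pos hx1 _)] at hbern
  have hpow : (x + 1) ^ (-α) = (x + 1) ^ (1 - α) / (x + 1) := by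
    rw [← rpow_sub_one hx1.ne']; ring_nf
  rw [hpow]
  field_simp at hbern ⊢
  linarith

lemma sum_range_sub_rpow_neg_le (hα0 : 0 ≤ α) (hα1 : α < 1) (n : ℕ) :
    ∑ j ∈ Finset.range n, ((n : ℝ) - j) ^ (-α) ≤ (n : ℝ) ^ (1 - α) / (1 - α) := by
  induction n with
  | zero => simp [zero_rpow (by linarith : 1 - α ≠ 0)]
  | succ n ih =>
    rw [Finset.sum_range_succ']
    push_cast
    simp_rw [add_sub_add_right_eq_sub, sub_zero]
    have hstep := one_sub_mul_rpow_neg_le_sub hα0 hα1.le n.cast_nonneg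
    rw [le_div_iff₀ (by linarith)] at ih ⊢
    linarith

end PSeries

lemma min_rpow_neg_le {a b c α : ℝ} (hα : 0 ≤ α) (hc : 0 < c) (hcab : c ≤ max a b) :
    min (a ^ (-α)) (b ^ (-α)) ≤ c ^ (-α) := by
  rcases le_total a b with hab | hab
  · rw [max_eq_right hab] at hcab
    exact (min_le_right _ _).trans (rpow_le_rpow_of_nonpos hc hcab (neg_nonpos.2 hα))
  · rw [max_eq_left hab] at hcab
    exact (min_le_left _ _).trans (rpow_le_rpow_of_nonpos hc hcab (neg_nonpos.2 hα))

lemma mem_Ico_natFloor_div_mul {h u : ℝ} (hh : 0 < h) (hu : 0 ≤ u) :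
    u ∈ Set.Ico (⌊u / h⌋₊ * h) ((⌊u / h⌋₊ + 1) * h) :=
  ⟨(le_div_iff₀ hh).1 (Nat.floor_le (div_nonneg hu hh.le)),
    (div_lt_iff₀ hh).1 (Nat.lt_floor_add_one _)⟩

lemma integral_le_of_le_Kker_on_cells {α h t : ℝ} {f : ℝ → ℝ} {w : ℕ → ℝ} {n : ℕ}
    (hα : 0 < α) (hh : 0 < h) (ht : 0 ≤ t) (htn : t < n * h) (hw : ∀ j < n, 0 ≤ w j)
    (hf : ∀ u ∈ Set.Ioc 0 t, 0 ≤ f u)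
    (hfw : ∀ j < n, ∀ u ∈ Set.Ioc 0 t, u ∈ Set.Ico (j * h) ((j + 1) * h) →
      f u ≤ Kker α ((j + 1) * h - u) * w j) :
    ∫ u in (0:ℝ)..t, f u ≤ h ^ α / Gamma (α + 1) * ∑ j ∈ Finset.range n, w j := by
  set cell : ℕ → Set ℝ := fun j => Set.Ico (j * h) ((j + 1) * h)
  set g : ℕ → ℝ → ℝ := fun j =>
    (cell j).indicator fun u => Kker α ((j + 1) * h - u) * w j
  have hcell : ∀ j : ℕ, (j : ℝ) * h ≤ (j + 1) * h := fun j => by linarith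
  have hg_int : ∀ j ∈ Finset.range n, Integrable (g j) := fun j _ =>
    IntegrableOn.integrable_indicator ((integrableOn_Ico_Kker_sub hα (hcell j)).mul_const _)
      measurableSet_Ico
  have hg_nonneg : ∀ j ∈ Finset.range n, ∀ u, 0 ≤ g j u := fun j hj =>
    Set.indicator_nonneg fun _ _ => mul_nonneg (Kker_nonneg hα _) (hw j (Finset.mem_range.1 hj))
  have hfg : ∀ u ∈ Set.Ioc 0 t, f u ≤ ∑ j ∈ Finset.range n, g j u := by
    intro u hu
    set j := ⌊u / h⌋₊
    have hj : u ∈ cell j := mem_Ico_natFloor_div_mul hh hu.1.le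
    have hjn : j < n := by
      have : (j : ℝ) * h < n * h := by linarith [hj.1, hu.2]
      exact_mod_cast lt_of_mul_lt_mul_right this hh.le
    calc f u ≤ g j u := (hfw j hjn u hu hj).trans_eq
          (Set.indicator_of_mem hj fun u => Kker α ((j + 1) * h - u) * w j).symm
      _ ≤ _ := Finset.single_le_sum (f := fun j => g j u) (fun j hj => hg_nonneg j hj u)
          (Finset.mem_range.2 hjn)
  have hg_integral : ∀ j : ℕ, ∫ u, g j u = h ^ α / Gamma (α + 1) * w j := fun j => by
    rw [MeasureTheory.integral_indicator measurableSet_Ico, MeasureTheory.integral_mul_const,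
      setIntegral_Ico_Kker_sub hα (hcell j)]
    ring_nf
  calc ∫ u in (0:ℝ)..t, f u = ∫ u in Set.Ioc 0 t, f u := intervalIntegral.integral_of_le ht
    _ ≤ ∫ u in Set.Ioc 0 t, ∑ j ∈ Finset.range n, g j u :=
      integral_mono_of_nonneg (ae_restrict_of_forall_mem measurableSet_Ioc hf)
        (integrable_finsetSum _ hg_int).integrableOn
        (ae_restrict_of_forall_mem measurableSet_Ioc hfg)
    _ ≤ ∫ u, ∑ j ∈ Finset.range n, g j u := setIntegral_le_integral
      (integrable_finsetSum _ hg_int) (ae_of_all _ fun u => Finset.sum_nonneg fun j hj =>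
        hg_nonneg j hj u)
    _ = _ := by simp_rw [integral_finsetSum _ hg_int, hg_integral, Finset.mul_sum]

lemma sub_chi_of_mem_Ico {h u : ℝ} {j : ℕ} (hh : 0 < h)
    (hu : u ∈ Set.Ico (j * h) ((j + 1) * h)) : h - chi h u = (j + 1) * h - u := by
  have hfloor : ⌊u / h⌋ = j := Int.floor_eq_iff.2
    ⟨by simpa using (le_div_iff₀ hh).2 hu.1, by simpa using (div_lt_iff₀ hh).2 hu.2⟩
  unfold chi phi
  rw [hfloor]
  push_cast
  ring

/-- The constant `3` comes from `max (x - 2) 1 ≥ x / 3`. -/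
lemma min_rpow_neg_le_of_lt {α h t u : ℝ} {j n : ℕ} (hα : 0 ≤ α) (hh : 0 < h) (hjn : j < n)
    (ht : (n - 1) * h ≤ t) (hu : u < (j + 1) * h) :
    min ((t - u) ^ (-α)) (h ^ (-α)) ≤ (h / 3) ^ (-α) * ((n : ℝ) - j) ^ (-α) := by
  have hjn : (j : ℝ) < n := by exact_mod_cast hjn
  rw [← mul_rpow (by positivity) (sub_pos.2 hjn).le]
  refine min_rpow_neg_le hα (mul_pos (by positivity) (sub_pos.2 hjn)) ?_
  have hx : ((n : ℝ) - j - 2) * h ≤ t - u := by linarith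
  rcases le_total ((n : ℝ) - j) 3 with h3 | h3
  · exact le_max_of_le_right (by nlinarith)
  · exact le_max_of_le_left (by nlinarith)

lemma integral_Kker_sub_chi_mul_min_le {α t h : ℝ} (hα0 : 0 < α) (hα1 : α < 1) (ht : 0 ≤ t)
    (hh : 0 < h) :
    ∫ u in (0:ℝ)..t, Kker α (h - chi h u) * min ((t - u) ^ (-α)) (h ^ (-α))
      ≤ h ^ α / Gamma (α + 1) *
          ((h / 3) ^ (-α) * ((⌊t / h⌋₊ + 1 : ℕ) : ℝ) ^ (1 - α) / (1 - α)) := by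
  set n := ⌊t / h⌋₊ + 1
  have hnt : (n - 1 : ℝ) * h ≤ t := by
    simpa [n] using (le_div_iff₀ hh).1 (Nat.floor_le (div_nonneg ht hh.le))
  have htn : t < n * h := by
    simpa [n] using (div_lt_iff₀ hh).1 (Nat.lt_floor_add_one (t / h))
  calc _ ≤ h ^ α / Gamma (α + 1) *
          ∑ j ∈ Finset.range n, (h / 3) ^ (-α) * ((n : ℝ) - j) ^ (-α) :=
        integral_le_of_le_Kker_on_cells hα0 hh ht htn
          (fun j hj => mul_nonneg (by positivity)
            (rpow_nonneg (sub_nonneg.2 (by exact_mod_cast hj.le)) _))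
          (fun u hu => mul_nonneg (Kker_nonneg hα0 _)
            (le_min (rpow_nonneg (by linarith [hu.2]) _) (rpow_nonneg hh.le _)))
          fun j hj u _ hu => by
            rw [sub_chi_of_mem_Ico hh hu]
            exact mul_le_mul_of_nonneg_left (min_rpow_neg_le_of_lt hα0.le hh hj hnt hu.2)
              (Kker_nonneg hα0 _)
    _ ≤ _ := by
        rw [← Finset.mul_sum, mul_div_assoc]
        gcongr
        exact sum_range_sub_rpow_neg_le hα0.le hα1 n

/-- `h ∫_0^t K(h−χ_h(u)) min((t−u)^(−α), h^(−α)) du ≤ C h^α`. -/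
theorem kernel_chi_integral_L1_bound (α T : ℝ) (hα : α ∈ Set.Ioo (1/2 : ℝ) 1) (hT : 0 < T) :
    ∃ C > 0, ∀ t h : ℝ, 0 ≤ t → t ≤ T → 0 < h → h ≤ 1 →
      h * (∫ u in (0:ℝ)..t, Kker α (h - chi h u) * min ((t - u) ^ (-α)) (h ^ (-α)))
        ≤ C * h ^ α := by
  obtain ⟨hα1, hα2⟩ := hα
  have hα0 : 0 < α := by linarith
  have hΓ : 0 < Gamma (α + 1) := Gamma_pos_of_pos (by linarith)
  refine ⟨3 ^ α * (T + 1) ^ (1 - α) / ((1 - α) * Gamma (α + 1)),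
    div_pos (by positivity) (mul_pos (by linarith) hΓ), ?_⟩
  intro t h ht htT hh hh1
  set n := ⌊t / h⌋₊ + 1
  have hnT : (n : ℝ) * h ≤ T + 1 := by
    have := (le_div_iff₀ hh).1 (Nat.floor_le (div_nonneg ht hh.le))
    push_cast [n]
    linarith
  calc _ ≤ h * (h ^ α / Gamma (α + 1) * ((h / 3) ^ (-α) * (n : ℝ) ^ (1 - α) / (1 - α))) :=
        mul_le_mul_of_nonneg_left (integral_Kker_sub_chi_mul_min_le hα0 hα2 ht hh) hh.le
    _ = 3 ^ α * ((n * h) ^ (1 - α) / ((1 - α) * Gamma (α + 1))) * h ^ α := by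
        rw [rpow_neg (by positivity), div_rpow hh.le (by norm_num), mul_rpow n.cast_nonneg hh.le,
          rpow_sub hh, rpow_one]
        field_simp
    _ ≤ _ := by
        rw [mul_div_assoc]
        gcongr
end
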